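/- For every ρ∈(0,1), every ε∈(0,1) and every r∈[0, 2(1+ε)/γ]: 0 ≤ (1/α(ρ))·ψ_ρ((α(ρ)/ρ)·r) ≤ ε/γ + ln 2/(γ·|ln ρ|) + (1/γ)·√(2/(π·|ln ρ|)). -/

import Mathlib

/-!
Write s = √r and L(z) = 1 − ρ + ρ exp(sz − s²/2). Tilting N(0,1) by exp(sz) gives N(s,1)
(Cameron–Martin), so L is the density of (1 − ρ)N(0,1) + ρN(s,1) with respect to N(0,1), and
ψ_ρ(r) = (1 − ρ) E[log L(Z)] + ρ E[log L(Z + s)] = E[L(Z) log L(Z)] is a Kullback–Leibler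
divergence: it is nonnegative because x log x ≥ x − 1 and E[L(Z)] = 1. For the upper bound the
first term is at most (1 − ρ) E[L(Z) − 1] = 0, while log L(Z + s) ≤ log 2 + (log ρ + r/2)⁺ + s Z⁺
with E[Z⁺] = 1/√(2π). At r = γ|ln ρ| r' with r' ≤ 2(1 + ε)/γ the positive part is at most
ε|ln ρ|, and s/√(2π) ≤ |ln ρ| √(2/(π|ln ρ|)).
-/

open MeasureTheory ProbabilityTheory Real

noncomputable section

namespace BernoulliPrior

/-- Standard Gaussian measure on ℝ. -/
def stdG : Measure ℝ := gaussianReal 0 1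

/-- The Bernoulli prior (1−ρ)δ₀ + ρδ₁. -/
def bern (ρ : ℝ) : Measure ℝ :=
  ENNReal.ofReal (1 - ρ) • Measure.dirac 0 + ENNReal.ofReal ρ • Measure.dirac 1

/-- ψ_ρ(r) = E[ln(1 − ρ + ρ exp(−r/2 + r X* + √r Z))]. -/
def psiB (ρ r : ℝ) : ℝ :=
  ∫ xs, ∫ z, Real.log (1 - ρ + ρ * Real.exp (-r / 2 + r * xs + Real.sqrt r * z))
    ∂stdG ∂(bern ρ)

open scoped NNReal

instance : IsProbabilityMeasure stdG := by
  unfold stdG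
  infer_instance

lemma integrable_id_stdG : Integrable id stdG :=
  (memLp_id_gaussianReal (μ := 0) (v := 1) 1).integrable le_rfl

lemma integral_exp_mul_gaussianReal (μ : ℝ) (v : ℝ≥0) (t : ℝ) :
    ∫ x, exp (t * x) ∂gaussianReal μ v = exp (μ * t + v * t ^ 2 / 2) :=
  congr_fun mgf_id_gaussianReal t

lemma gaussianReal_tilted_mul (μ : ℝ) {v : ℝ≥0} (hv : v ≠ 0) (t : ℝ) :
    (gaussianReal μ v).tilted (t * ·) = gaussianReal (μ + v * t) v := by
  rw [Measure.tilted, integral_exp_mul_gaussianReal, gaussianReal_of_var_ne_zero _ hv,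
    gaussianReal_of_var_ne_zero _ hv,
    ← withDensity_mul _ (measurable_gaussianPDF _ _) (by fun_prop)]
  congr 1
  ext x
  simp only [Pi.mul_apply, gaussianPDF, gaussianPDFReal, ← ENNReal.ofReal_mul
    (mul_nonneg (inv_nonneg.2 (sqrt_nonneg _)) (exp_pos _).le), mul_assoc, ← exp_add, ← exp_sub]
  congr 4
  field_simp
  ring

lemma stdG_tilted_mul (s : ℝ) : stdG.tilted (s * ·) = stdG.map (· + s) := by
  rw [stdG, gaussianReal_map_add_const, gaussianReal_tilted_mul _ one_ne_zero]
  simp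

section CameronMartin

variable {E : Type*} [NormedAddCommGroup E] [NormedSpace ℝ E]

lemma integral_comp_add_stdG (s : ℝ) (g : ℝ → E) :
    ∫ z, g (z + s) ∂stdG = ∫ z, exp (s * z - s ^ 2 / 2) • g z ∂stdG := by
  rw [← (measurableEmbedding_addRight s).integral_map, ← stdG_tilted_mul, integral_tilted, stdG,
    integral_exp_mul_gaussianReal]
  simp [exp_sub]

lemma integrable_comp_add_stdG_iff (s : ℝ) (g : ℝ → E) :
    Integrable (fun z => g (z + s)) stdG ↔
      Integrable (fun z => exp (s * z - s ^ 2 / 2) • g z) stdG := by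
  have h : (fun z => exp (s * z - s ^ 2 / 2) • g z) =
      (exp (s ^ 2 / 2))⁻¹ • fun z => exp (s * z) • g z := by
    ext z
    simp only [exp_sub, div_eq_inv_mul, mul_smul, Pi.smul_apply]
  rw [h, integrable_smul_iff (by positivity), stdG,
    ← integrable_tilted_iff (integrable_exp_mul_gaussianReal s), ← stdG, stdG_tilted_mul,
    (measurableEmbedding_addRight s).integrable_map_iff]
  rfl

end CameronMartin

lemma integral_Ioi_mul_exp_neg_sq_div_two :
    ∫ x in Set.Ioi (0 : ℝ), x * exp (-x ^ 2 / 2) = 1 := by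
  have h := integral_rpow_mul_exp_neg_mul_rpow two_pos (by norm_num : (-1 : ℝ) < 1) one_half_pos
  norm_num [rpow_two] at h
  simpa [neg_div, div_eq_inv_mul] using h

lemma integral_max_zero_stdG : ∫ z, max z 0 ∂stdG = (√(2 * π))⁻¹ := by
  have hpos (z : ℝ) : max z 0 * exp (-z ^ 2 / 2) =
      (Set.Ioi 0).indicator (fun x => x * exp (-x ^ 2 / 2)) z := by
    rcases le_or_gt z 0 with hz | hz
    · simp [hz, not_lt.2 hz]
    · simp [hz, hz.le]
  rw [stdG, integral_gaussianReal_eq_integral_smul one_ne_zero]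
  simp only [gaussianPDFReal, smul_eq_mul, NNReal.coe_one, mul_one, sub_zero, mul_assoc,
    integral_const_mul, mul_comm (exp _), hpos, integral_indicator measurableSet_Ioi,
    integral_Ioi_mul_exp_neg_sq_div_two]

def mixtureDensity (ρ s z : ℝ) : ℝ := 1 - ρ + ρ * exp (s * z - s ^ 2 / 2)

section Mixture

variable {ρ s : ℝ}

lemma exp_neg_abs_le_mixtureDensity (hρ0 : 0 ≤ ρ) (hρ1 : ρ ≤ 1) (z : ℝ) :
    exp (-|s * z - s ^ 2 / 2|) ≤ mixtureDensity ρ s z := by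
  have h1 : exp (-|s * z - s ^ 2 / 2|) ≤ 1 := exp_le_one_iff.2 (neg_nonpos.2 (abs_nonneg _))
  have h2 : exp (-|s * z - s ^ 2 / 2|) ≤ exp (s * z - s ^ 2 / 2) := exp_le_exp.2 (neg_abs_le _)
  unfold mixtureDensity
  nlinarith [mul_le_mul_of_nonneg_left h1 (sub_nonneg.2 hρ1), mul_le_mul_of_nonneg_left h2 hρ0]

lemma mixtureDensity_le_exp_abs (hρ0 : 0 ≤ ρ) (hρ1 : ρ ≤ 1) (z : ℝ) :
    mixtureDensity ρ s z ≤ exp |s * z - s ^ 2 / 2| := by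
  have h1 : 1 ≤ exp |s * z - s ^ 2 / 2| := one_le_exp (abs_nonneg _)
  have h2 : exp (s * z - s ^ 2 / 2) ≤ exp |s * z - s ^ 2 / 2| := exp_le_exp.2 (le_abs_self _)
  unfold mixtureDensity
  nlinarith [mul_le_mul_of_nonneg_left h1 (sub_nonneg.2 hρ1), mul_le_mul_of_nonneg_left h2 hρ0]

lemma mixtureDensity_pos (hρ0 : 0 ≤ ρ) (hρ1 : ρ ≤ 1) (z : ℝ) : 0 < mixtureDensity ρ s z :=
  (exp_pos _).trans_le (exp_neg_abs_le_mixtureDensity hρ0 hρ1 z)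

lemma abs_log_mixtureDensity_le (hρ0 : 0 ≤ ρ) (hρ1 : ρ ≤ 1) (z : ℝ) :
    |log (mixtureDensity ρ s z)| ≤ |s * z - s ^ 2 / 2| :=
  have hpos := mixtureDensity_pos (s := s) hρ0 hρ1 z
  abs_le.2 ⟨(le_log_iff_exp_le hpos).2 (exp_neg_abs_le_mixtureDensity hρ0 hρ1 z),
    (log_le_iff_le_exp hpos).2 (mixtureDensity_le_exp_abs hρ0 hρ1 z)⟩

lemma integrable_log_mixtureDensity_comp_add (hρ0 : 0 ≤ ρ) (hρ1 : ρ ≤ 1) (c : ℝ) :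
    Integrable (fun z => log (mixtureDensity ρ s (z + c))) stdG := by
  have hbound : Integrable (fun z => |s * (z + c) - s ^ 2 / 2|) stdG :=
    (((integrable_id_stdG.add (integrable_const c)).const_mul s).sub (integrable_const _)).abs
  refine hbound.mono' (Measurable.log (by unfold mixtureDensity; fun_prop)).aestronglyMeasurable
    (ae_of_all _ fun z => ?_)
  exact abs_log_mixtureDensity_le hρ0 hρ1 (z + c)

lemma integrable_log_mixtureDensity (hρ0 : 0 ≤ ρ) (hρ1 : ρ ≤ 1) :
    Integrable (fun z => log (mixtureDensity ρ s z)) stdG := by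
  simpa using integrable_log_mixtureDensity_comp_add (s := s) hρ0 hρ1 0

lemma mixtureDensity_mul_eq (g : ℝ → ℝ) (z : ℝ) : mixtureDensity ρ s z * g z =
    (1 - ρ) * g z + ρ * (exp (s * z - s ^ 2 / 2) • g z) := by
  rw [mixtureDensity, smul_eq_mul]
  ring

lemma integrable_mixtureDensity_mul {g : ℝ → ℝ} (hg : Integrable g stdG)
    (hgs : Integrable (fun z => g (z + s)) stdG) :
    Integrable (fun z => mixtureDensity ρ s z * g z) stdG := by
  simp_rw [mixtureDensity_mul_eq]
  exact (hg.const_mul _).add (((integrable_comp_add_stdG_iff s g).1 hgs).const_mul _)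

lemma integral_mixtureDensity_mul {g : ℝ → ℝ} (hg : Integrable g stdG)
    (hgs : Integrable (fun z => g (z + s)) stdG) :
    ∫ z, mixtureDensity ρ s z * g z ∂stdG =
      (1 - ρ) * ∫ z, g z ∂stdG + ρ * ∫ z, g (z + s) ∂stdG := by
  simp_rw [mixtureDensity_mul_eq]
  rw [integral_add (hg.const_mul _) (((integrable_comp_add_stdG_iff s g).1 hgs).const_mul _),
    integral_const_mul, integral_const_mul, integral_comp_add_stdG]

lemma integrable_mixtureDensity : Integrable (mixtureDensity ρ s) stdG := by
  simpa using integrable_mixtureDensity_mul (ρ := ρ) (integrable_const (1 : ℝ)) (integrable_const 1)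

lemma integral_mixtureDensity_sub_one : ∫ z, (mixtureDensity ρ s z - 1) ∂stdG = 0 := by
  have h := integral_mixtureDensity_mul (ρ := ρ) (s := s) (integrable_const (1 : ℝ))
    (integrable_const 1)
  simp only [mul_one, integral_const, probReal_univ, smul_eq_mul] at h
  rw [integral_sub integrable_mixtureDensity (integrable_const 1), h]
  simp

lemma integral_log_mixtureDensity_nonpos (hρ0 : 0 ≤ ρ) (hρ1 : ρ ≤ 1) :
    ∫ z, log (mixtureDensity ρ s z) ∂stdG ≤ 0 :=
  calc ∫ z, log (mixtureDensity ρ s z) ∂stdG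
      ≤ ∫ z, (mixtureDensity ρ s z - 1) ∂stdG :=
        integral_mono (integrable_log_mixtureDensity hρ0 hρ1)
          (integrable_mixtureDensity.sub (integrable_const 1))
          fun z => log_le_sub_one_of_pos (mixtureDensity_pos hρ0 hρ1 z)
    _ = 0 := integral_mixtureDensity_sub_one

lemma integral_mixtureDensity_mul_log (hρ0 : 0 ≤ ρ) (hρ1 : ρ ≤ 1) :
    ∫ z, mixtureDensity ρ s z * log (mixtureDensity ρ s z) ∂stdG =
      (1 - ρ) * ∫ z, log (mixtureDensity ρ s z) ∂stdG
        + ρ * ∫ z, log (mixtureDensity ρ s (z + s)) ∂stdG :=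
  integral_mixtureDensity_mul (integrable_log_mixtureDensity hρ0 hρ1)
    (integrable_log_mixtureDensity_comp_add hρ0 hρ1 s)

lemma integral_mixtureDensity_mul_log_nonneg (hρ0 : 0 ≤ ρ) (hρ1 : ρ ≤ 1) :
    0 ≤ ∫ z, mixtureDensity ρ s z * log (mixtureDensity ρ s z) ∂stdG :=
  calc 0 = ∫ z, (mixtureDensity ρ s z - 1) ∂stdG := integral_mixtureDensity_sub_one.symm
    _ ≤ ∫ z, mixtureDensity ρ s z * log (mixtureDensity ρ s z) ∂stdG :=
        integral_mono (integrable_mixtureDensity.sub (integrable_const 1))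
          (integrable_mixtureDensity_mul (integrable_log_mixtureDensity hρ0 hρ1)
            (integrable_log_mixtureDensity_comp_add hρ0 hρ1 s))
          fun z => self_sub_one_le_mul_log (mixtureDensity_pos hρ0 hρ1 z).le

lemma log_mixtureDensity_comp_add_le (hρ0 : 0 < ρ) (hρ1 : ρ ≤ 1) (hs : 0 ≤ s) (z : ℝ) :
    log (mixtureDensity ρ s (z + s)) ≤ log 2 + max 0 (log ρ + s ^ 2 / 2) + s * max z 0 := by
  set M := max 0 (log ρ + s ^ 2 / 2) + s * max z 0
  have hM0 : 0 ≤ M := by positivity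
  have hM : log ρ + s ^ 2 / 2 + s * z ≤ M :=
    add_le_add (le_max_right _ _) (mul_le_mul_of_nonneg_left (le_max_left _ _) hs)
  have hL : mixtureDensity ρ s (z + s) = 1 - ρ + exp (log ρ + s ^ 2 / 2 + s * z) := by
    rw [mixtureDensity, add_assoc, exp_add, exp_log hρ0]
    ring_nf
  rw [add_assoc, log_le_iff_le_exp (mixtureDensity_pos hρ0.le hρ1 _), exp_add, exp_log two_pos]
  linarith [one_le_exp hM0, exp_le_exp.2 hM, hρ0]

lemma integral_log_mixtureDensity_comp_add_le (hρ0 : 0 < ρ) (hρ1 : ρ ≤ 1) (hs : 0 ≤ s) :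
    ∫ z, log (mixtureDensity ρ s (z + s)) ∂stdG
      ≤ log 2 + max 0 (log ρ + s ^ 2 / 2) + s / √(2 * π) := by
  have hmax : Integrable (fun z => max z 0) stdG := integrable_id_stdG.pos_part
  calc ∫ z, log (mixtureDensity ρ s (z + s)) ∂stdG
      ≤ ∫ z, (log 2 + max 0 (log ρ + s ^ 2 / 2) + s * max z 0) ∂stdG :=
        integral_mono (integrable_log_mixtureDensity_comp_add hρ0.le hρ1 s)
          ((integrable_const _).add (hmax.const_mul s)) (log_mixtureDensity_comp_add_le hρ0 hρ1 hs)
    _ = log 2 + max 0 (log ρ + s ^ 2 / 2) + s / √(2 * π) := by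
        rw [integral_add (integrable_const _) (hmax.const_mul s), integral_const_mul,
          integral_max_zero_stdG, integral_const, probReal_univ, one_smul, ← div_eq_mul_inv]

end Mixture

lemma integral_bern {ρ : ℝ} (hρ0 : 0 ≤ ρ) (hρ1 : ρ ≤ 1) (f : ℝ → ℝ) :
    ∫ x, f x ∂bern ρ = (1 - ρ) * f 0 + ρ * f 1 := by
  rw [bern, integral_add_measure ((integrable_dirac (by simp)).smul_measure ENNReal.ofReal_ne_top)
    ((integrable_dirac (by simp)).smul_measure ENNReal.ofReal_ne_top),
    integral_smul_measure, integral_smul_measure, integral_dirac, integral_dirac,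
    ENNReal.toReal_ofReal (sub_nonneg.2 hρ1), ENNReal.toReal_ofReal hρ0, smul_eq_mul, smul_eq_mul]

lemma psiB_sq {ρ s : ℝ} (hρ0 : 0 ≤ ρ) (hρ1 : ρ ≤ 1) (hs : 0 ≤ s) :
    psiB ρ (s ^ 2) = (1 - ρ) * ∫ z, log (mixtureDensity ρ s z) ∂stdG
      + ρ * ∫ z, log (mixtureDensity ρ s (z + s)) ∂stdG := by
  rw [psiB, integral_bern hρ0 hρ1, sqrt_sq hs]
  simp only [mixtureDensity]
  congr 3 <;> ext z <;> ring_nf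

theorem psiB_nonneg {ρ r : ℝ} (hρ0 : 0 ≤ ρ) (hρ1 : ρ ≤ 1) (hr : 0 ≤ r) : 0 ≤ psiB ρ r := by
  rw [← sq_sqrt hr, psiB_sq hρ0 hρ1 (sqrt_nonneg r), ← integral_mixtureDensity_mul_log hρ0 hρ1]
  exact integral_mixtureDensity_mul_log_nonneg hρ0 hρ1

theorem psiB_le {ρ r : ℝ} (hρ0 : 0 < ρ) (hρ1 : ρ ≤ 1) (hr : 0 ≤ r) :
    psiB ρ r ≤ ρ * (log 2 + max 0 (log ρ + r / 2) + √r / √(2 * π)) := by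
  rw [← sq_sqrt hr, psiB_sq hρ0.le hρ1 (sqrt_nonneg r), sqrt_sq (sqrt_nonneg r)]
  have hX0 := mul_nonpos_of_nonneg_of_nonpos (sub_nonneg.2 hρ1)
    (integral_log_mixtureDensity_nonpos (s := √r) hρ0.le hρ1)
  have hX1 := mul_le_mul_of_nonneg_left
    (integral_log_mixtureDensity_comp_add_le hρ0 hρ1 (sqrt_nonneg r)) hρ0.le
  linarith

/-- Lemma 3 of the paper: bounds on (1/α(ρ)) ψ_ρ((α(ρ)/ρ) r) for the
Bernoulli prior, where α(ρ) = γρ|ln ρ| (so that (α(ρ)/ρ) r = γ|ln ρ| r). -/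
theorem psiB_bounds (γ : ℝ) (hγ : 0 < γ) :
    ∀ ρ ∈ Set.Ioo (0 : ℝ) 1, ∀ ε ∈ Set.Ioo (0 : ℝ) 1,
      ∀ r ∈ Set.Icc (0 : ℝ) (2 * (1 + ε) / γ),
        0 ≤ psiB ρ (γ * |Real.log ρ| * r) / (γ * ρ * |Real.log ρ|) ∧
        psiB ρ (γ * |Real.log ρ| * r) / (γ * ρ * |Real.log ρ|)
          ≤ ε / γ + Real.log 2 / (γ * |Real.log ρ|)
            + (1 / γ) * Real.sqrt (2 / (π * |Real.log ρ|)) := by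
  intro ρ ⟨hρ0, hρ1⟩ ε ⟨hε0, hε1⟩ r ⟨hr0, hrε⟩
  set K := |log ρ|
  have hK : 0 < K := abs_pos.2 (log_neg hρ0 hρ1).ne
  have hK_eq : K = -log ρ := abs_of_neg (log_neg hρ0 hρ1)
  have hγr : γ * r ≤ 2 * (1 + ε) := by rwa [le_div_iff₀ hγ, mul_comm] at hrε
  have hR : 0 ≤ γ * K * r := by positivity
  have hden : 0 < γ * ρ * K := by positivity
  refine ⟨div_nonneg (psiB_nonneg hρ0.le hρ1.le hR) hden.le, (div_le_iff₀ hden).2 ?_⟩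
  have hmax : max 0 (log ρ + γ * K * r / 2) ≤ ε * K := max_le (by positivity) (by nlinarith)
  have hsqrt : √(γ * K * r) / √(2 * π) ≤ K * √(2 / (π * K)) := by
    calc √(γ * K * r) / √(2 * π) = √(γ * K * r / (2 * π)) := (sqrt_div' _ two_pi_pos.le).symm
      _ ≤ √(K ^ 2 * (2 / (π * K))) := sqrt_le_sqrt (by field_simp; nlinarith [pi_pos])
      _ = K * √(2 / (π * K)) := by rw [sqrt_mul (sq_nonneg K), sqrt_sq hK.le]
  calc psiB ρ (γ * K * r)
      ≤ ρ * (log 2 + max 0 (log ρ + γ * K * r / 2) + √(γ * K * r) / √(2 * π)) :=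
        psiB_le hρ0 hρ1.le hR
    _ ≤ ρ * (log 2 + ε * K + K * √(2 / (π * K))) := by gcongr
    _ = _ := by field_simp; ring

end BernoulliPrior
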